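/- Let M be a matroid and suppose every restriction M|X of M with r(M|X) < r(M) satisfies ε(M|X) ≤ α·φ^{r(M|X)} for some α > 0, where φ = (1+√5)/2, while ε(M) > α·φ^{r(M)}. Then for every cocircuit C of M of rank at most r(M) - 2, the inequality ε(M|C) + ε(M \ C) ≤ (φ^{-2} + φ^{-1})·α·φ^{r(M)} yields a contradiction with ε(M) = ε(M|C) + ε(M \ C); hence every cocircuit of such a minimal M has rank at least r(M) - 1. -/

import Mathlib

open Set Matroid

namespace PaperDefs

variable {α β : Type*}

/-- The rank of a matroid: the common cardinality of its bases (junk value if infinite). -/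
noncomputable def rk (M : Matroid α) : ℕ := sSup (Set.ncard '' {B | M.IsBase B})

/-- The rank of a set in a matroid. -/
noncomputable def rkOf (M : Matroid α) (X : Set α) : ℕ := rk (M ↾ X)

/-- A point is a rank-one flat. -/
def Point (M : Matroid α) (P : Set α) : Prop := M.IsFlat P ∧ rkOf M P = 1

/-- A line is a rank-two flat. -/
def Line (M : Matroid α) (L : Set α) : Prop := M.IsFlat L ∧ rkOf M L = 2

/-- ε(M) : the number of points of `M`. -/
noncomputable def eps (M : Matroid α) : ℕ := {P | Point M P}.ncard

/-- Deletion of a set from a matroid. -/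
def delete (M : Matroid α) (D : Set α) : Matroid α := M ↾ (M.E \ D)

/-- Contraction of a set in a matroid, via duality. -/
def contract (M : Matroid α) (C : Set α) : Matroid α := (delete M✶ C)✶

/-- `N` is a minor of `M`. -/
def IsMinor (N M : Matroid α) : Prop :=
  ∃ C D : Set α, C ⊆ M.E ∧ D ⊆ M.E ∧ Disjoint C D ∧ N = delete (contract M C) D

/-- A matroid is simple if all of its subsets of size at most two are independent. -/
def Simple (M : Matroid α) : Prop :=
  ∀ I ⊆ M.E, I.Finite → I.ncard ≤ 2 → M.Indep I

/-- `M` is (a copy of) the uniform matroid `U_{k,n}`. -/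
def IsUnif (M : Matroid α) (k n : ℕ) : Prop :=
  M.E.Finite ∧ M.E.ncard = n ∧ ∀ I ⊆ M.E, (M.Indep I ↔ I.Finite ∧ I.ncard ≤ k)

/-- A circuit : a minimal dependent set. -/
def Circuit (M : Matroid α) (C : Set α) : Prop :=
  C ⊆ M.E ∧ ¬ M.Indep C ∧ ∀ D ⊂ C, M.Indep D

/-- A cocircuit : a circuit of the dual. -/
def Cocircuit (M : Matroid α) (C : Set α) : Prop := Circuit M✶ C

/-- A loop. -/
def Loop (M : Matroid α) (e : α) : Prop := e ∈ M.E ∧ ¬ M.Indep {e}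

/-- Representability of a matroid over a field. -/
def Rep (M : Matroid α) (F : Type*) [Field F] : Prop :=
  ∃ (n : ℕ) (φ : α → (Fin n → F)),
    ∀ I ⊆ M.E, (M.Indep I ↔ LinearIndependent F (fun x : I => φ x.1))

/-- `M` is (a copy of) the projective geometry `PG(n-1,q)` over the finite field `F` of order
`q`: a simple rank-`n` `F`-representable matroid with `(q^n-1)/(q-1)` elements. -/
def IsPG (M : Matroid α) (F : Type*) [Field F] [Fintype F] (n : ℕ) : Prop :=
  Simple M ∧ Rep M F ∧ rk M = n ∧ M.E.Finite ∧
    M.E.ncard = (Fintype.card F ^ n - 1) / (Fintype.card F - 1)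

/-- A flat `Fl` of `M` is modular. -/
def ModularFlat (M : Matroid α) (Fl : Set α) : Prop :=
  M.IsFlat Fl ∧ ∀ G, M.IsFlat G → rkOf M Fl + rkOf M G = rkOf M (Fl ∪ G) + rkOf M (Fl ∩ G)

/-- `M'` is the principal extension of `M` by the new element `e` placed freely on the flat
`Fl` of `M`. -/
def IsPrincipalExt (M' M : Matroid α) (e : α) (Fl : Set α) : Prop :=
  M.IsFlat Fl ∧ e ∉ M.E ∧ M'.E = insert e M.E ∧ delete M' {e} = M ∧
    ∀ X ⊆ M.E, (e ∈ M'.closure X ↔ Fl ⊆ M.closure X)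

/-- `N` is (a copy of) `P(n-1,q,k)` : the principal extension of a rank-`k` flat of
`PG(n-1,q)`, where `q = |F|`. -/
def IsPGPrincExt (N : Matroid α) (F : Type*) [Field F] [Fintype F] (n k : ℕ) : Prop :=
  ∃ (e : α) (Fl : Set α), IsPG (delete N {e}) F n ∧ rkOf (delete N {e}) Fl = k ∧
    IsPrincipalExt N (delete N {e}) e Fl

/-- `T` is the truncation of the matroid `N`. -/
def IsTruncation (T N : Matroid α) : Prop :=
  T.E = N.E ∧ ∀ I, (T.Indep I ↔ N.Indep I ∧ I.Finite ∧ I.ncard ≤ rk N - 1)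

/-- `M` is (a copy of) the rank-`k` free spike `Λ_k` : ground set consists of `k` two-element
legs, and a set is independent iff it has at most `k` elements and contains at most one leg. -/
def IsFreeSpike (M : Matroid α) (k : ℕ) : Prop :=
  ∃ f : Fin k × Fin 2 ↪ α, M.E = Set.range f ∧
    ∀ I ⊆ M.E, (M.Indep I ↔ I.Finite ∧ I.ncard ≤ k ∧
      ¬ ∃ i j : Fin k, i ≠ j ∧ {f (i,0), f (i,1), f (j,0), f (j,1)} ⊆ I)

section Helpers

variable {α : Type*} {M : Matroid α} {B X C P : Set α} {e f : α}
variable {α : Type*} {M : Matroid α} {B X C P : Set α} {e f : α}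

lemma flat_closure' (M : Matroid α) (X : Set α) : M.IsFlat (M.closure X) := by
  have hne : Nonempty {F // M.IsFlat F ∧ X ∩ M.E ⊆ F} :=
    ⟨⟨M.E, M.ground_isFlat, inter_subset_right⟩⟩
  rw [closure_def, sInter_eq_iInter]
  exact Matroid.IsFlat.iInter (Fs := fun F : {F // M.IsFlat F ∧ X ∩ M.E ⊆ F} => F.1)
    fun F => F.2.1

lemma rk_base' (hB : M.IsBase B) : rk M = B.ncard := by
  rw [rk]
  have : Set.ncard '' {B | M.IsBase B} = {B.ncard} := by
    ext n
    constructor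
    · rintro ⟨B', hB', rfl⟩
      exact hB'.ncard_eq_ncard_of_isBase hB
    · rintro rfl
      exact ⟨B, hB, rfl⟩
  rw [this, csSup_singleton]

lemma closure_singleton_eq' (he : M.Indep {e}) :
    M.closure {e} = {f | f ∈ M.E ∧ (f = e ∨ ¬ M.Indep {f, e})} := by
  ext f
  by_cases hf : f ∈ M.E
  · have h := he.notMem_closure_iff (e := f) hf
    simp only [mem_singleton_iff] at h
    simp only [mem_setOf_eq, hf, true_and]
    tauto
  · simp only [mem_setOf_eq, hf, false_and, iff_false]
    exact fun h => hf (M.closure_subset_ground _ h)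

lemma restrict_closure_singleton' (hC : C ⊆ M.E) (he : M.Indep {e}) (heC : e ∈ C) :
    (M ↾ C).closure {e} = M.closure {e} ∩ C := by
  have he' : (M ↾ C).Indep {e} := restrict_indep_iff.mpr ⟨he, singleton_subset_iff.2 heC⟩
  rw [closure_singleton_eq' he', closure_singleton_eq' he]
  ext f
  simp only [mem_setOf_eq, restrict_ground_eq, restrict_indep_iff, mem_inter_iff,
    insert_subset_iff, singleton_subset_iff]
  constructor
  · rintro ⟨hfC, h⟩
    refine ⟨⟨hC hfC, ?_⟩, hfC⟩
    rcases h with h | h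
    · exact Or.inl h
    · exact Or.inr fun hi => h ⟨hi, hfC, heC⟩
  · rintro ⟨⟨-, h⟩, hfC⟩
    refine ⟨hfC, ?_⟩
    rcases h with h | h
    · exact Or.inl h
    · exact Or.inr fun hi => h hi.1

lemma parallel_closure_eq' (he : M.Indep {e}) (hf : M.Indep {f})
    (hfe : f ∈ M.closure {e}) : M.closure {f} = M.closure {e} := by
  refine subset_antisymm
    (M.closure_subset_closure_of_subset_closure (singleton_subset_iff.2 hfe)) ?_
  refine M.closure_subset_closure_of_subset_closure (singleton_subset_iff.2 ?_)
  have hfne : f ∉ M.closure (∅ : Set α) := by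
    have := hf.notMem_closure_diff_of_mem (mem_singleton f)
    simpa using this
  have : e ∈ M.closure (insert f ∅) := by
    refine mem_closure_insert hfne ?_
    simpa using hfe
  simpa using this

lemma point_iff' {M : Matroid α} {P : Set α} :
    Point M P ↔ ∃ e, M.Indep {e} ∧ P = M.closure {e} := by
  constructor
  · rintro ⟨hP, hr⟩
    obtain ⟨B₀, hB₀⟩ := (M ↾ P).exists_isBase
    have hcard : B₀.ncard = 1 := (rk_base' hB₀).symm.trans hr
    obtain ⟨e, rfl⟩ := Set.ncard_eq_one.mp hcard
    have hb : M.IsBasis {e} P := (isBase_restrict_iff hP.subset_ground).1 hB₀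
    refine ⟨e, hb.indep, ?_⟩
    rw [hb.closure_eq_closure, hP.closure]
  · rintro ⟨e, he, rfl⟩
    refine ⟨flat_closure' M {e}, ?_⟩
    have hb : (M ↾ M.closure {e}).IsBase {e} := (he.isBasis_closure).isBase_restrict
    exact (rk_base' hb).trans (ncard_singleton e)


lemma rkOf_restrict_eq {R : Set α} (hB : (M ↾ R).IsBase B) : rk (M ↾ R) = B.ncard :=
  rk_base' hB

lemma cocircuit_not_spanning (hC : Cocircuit M C) : ¬ M.Spanning (M.E \ C) := by
  intro hsp
  have hCE : C ⊆ M.E := by have := hC.1; rwa [dual_ground] at this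
  exact hC.2.1 (coindep_def.mp ((coindep_iff_compl_spanning hCE).mpr hsp))

lemma cocircuit_closure_compl (hC : Cocircuit M C) :
    ∀ f ∈ C, f ∉ M.closure (M.E \ C) := by
  intro f hf hcl
  have hCE : C ⊆ M.E := by have := hC.1; rwa [dual_ground] at this
  have hco : M✶.Indep (C \ {f}) := hC.2.2 _ (Set.sdiff_singleton_ssubset.mpr hf)
  have hsp : M.Spanning (M.E \ (C \ {f})) :=
    (coindep_iff_compl_spanning (diff_subset.trans hCE)).mp (coindep_def.mpr hco)
  have heq : M.E \ (C \ {f}) = insert f (M.E \ C) := by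
    rw [diff_diff_right, inter_eq_self_of_subset_right (singleton_subset_iff.2 (hCE hf)),
      union_singleton]
  rw [heq] at hsp
  refine cocircuit_not_spanning hC ⟨?_, diff_subset⟩
  rw [← closure_insert_eq_of_mem_closure hcl]
  exact hsp.closure_eq

lemma closure_singleton_subset_compl (hC : Cocircuit M C) (he : M.Indep {e})
    (heH : e ∈ M.E \ C) : M.closure {e} ⊆ M.E \ C := by
  intro f hfcl
  refine ⟨M.closure_subset_ground _ hfcl, fun hfC => ?_⟩
  exact cocircuit_closure_compl hC f hfC
    (M.closure_subset_closure (singleton_subset_iff.2 heH) hfcl)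

lemma rk_restrict_le' (hfin : M.E.Finite) {Y : Set α} (hXY : X ⊆ Y) (hY : Y ⊆ M.E) :
    rk (M ↾ X) ≤ rk (M ↾ Y) := by
  obtain ⟨B₀, hB₀⟩ := (M ↾ X).exists_isBase
  obtain ⟨h1, h2⟩ := restrict_indep_iff.1 hB₀.indep
  obtain ⟨B₁, hB₁, hsub⟩ := (restrict_indep_iff.2 ⟨h1, h2.trans hXY⟩ :
    (M ↾ Y).Indep B₀).exists_isBase_superset
  have hB₁Y : B₁ ⊆ Y := by simpa using hB₁.subset_ground
  rw [rkOf_restrict_eq hB₀, rkOf_restrict_eq hB₁]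
  exact Set.ncard_le_ncard hsub ((hfin.subset hY).subset hB₁Y)

lemma rk_restrict_lt_of_cocircuit (hfin : M.E.Finite) (hC : Cocircuit M C) :
    rk (M ↾ (M.E \ C)) < rk M := by
  obtain ⟨B₀, hB₀⟩ := (M ↾ (M.E \ C)).exists_isBase
  obtain ⟨h1, h2⟩ := restrict_indep_iff.1 hB₀.indep
  obtain ⟨B, hB, hsub⟩ := h1.exists_isBase_superset
  have hBnot : ¬ B ⊆ M.E \ C := fun hBs =>
    cocircuit_not_spanning hC (hB.spanning_of_superset hBs diff_subset)
  have hss : B₀ ⊂ B := hsub.ssubset_of_ne (fun h => hBnot (h ▸ h2))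
  rw [rkOf_restrict_eq hB₀, rk_base' hB]
  exact Set.ncard_lt_ncard hss (hfin.subset hB.subset_ground)

lemma eps_split' (hfin : M.E.Finite) (hC : Cocircuit M C) :
    eps M = eps (M ↾ C) + eps (M ↾ (M.E \ C)) := by
  have hCE : C ⊆ M.E := by have := hC.1; rwa [dual_ground] at this
  set H := M.E \ C with hH
  set NL := {e | M.Indep {e}} with hNL
  have hNLE : NL ⊆ M.E := fun e he => singleton_subset_iff.1 he.subset_ground
  have hNLfin : NL.Finite := hfin.subset hNLE
  set F : α → Set α := fun e => M.closure {e} with hF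
  have hFH : ∀ e ∈ NL ∩ H, F e ⊆ H := fun e he =>
    closure_singleton_subset_compl hC he.1 he.2
  have hPts : {P | Point M P} = F '' NL := by
    ext P
    simp only [mem_setOf_eq, point_iff', mem_image, hNL, hF, mem_setOf_eq]
    exact exists_congr fun e => and_congr_right fun _ => eq_comm
  have hPtsC : {P | Point (M ↾ C) P} = (fun e => F e ∩ C) '' (NL ∩ C) := by
    ext P
    simp only [mem_setOf_eq, point_iff', mem_image, mem_inter_iff, hNL, mem_setOf_eq]
    constructor
    · rintro ⟨e, he, rfl⟩
      obtain ⟨he1, he2⟩ := restrict_indep_iff.1 he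
      have heC : e ∈ C := singleton_subset_iff.1 he2
      exact ⟨e, ⟨he1, heC⟩, (restrict_closure_singleton' hCE he1 heC).symm⟩
    · rintro ⟨e, ⟨he, heC⟩, rfl⟩
      exact ⟨e, restrict_indep_iff.2 ⟨he, singleton_subset_iff.2 heC⟩,
        (restrict_closure_singleton' hCE he heC).symm⟩
  have hPtsH : {P | Point (M ↾ H) P} = F '' (NL ∩ H) := by
    ext P
    simp only [mem_setOf_eq, point_iff', mem_image, mem_inter_iff, hNL, mem_setOf_eq]
    constructor
    · rintro ⟨e, he, rfl⟩
      obtain ⟨he1, he2⟩ := restrict_indep_iff.1 he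
      have heH : e ∈ H := singleton_subset_iff.1 he2
      refine ⟨e, ⟨he1, heH⟩, ?_⟩
      rw [restrict_closure_singleton' diff_subset he1 heH,
        inter_eq_self_of_subset_left (hFH e ⟨he1, heH⟩)]
    · rintro ⟨e, ⟨he, heH⟩, rfl⟩
      refine ⟨e, restrict_indep_iff.2 ⟨he, singleton_subset_iff.2 heH⟩, ?_⟩
      rw [restrict_closure_singleton' diff_subset he heH,
        inter_eq_self_of_subset_left (hFH e ⟨he, heH⟩)]
  have hdisj : Disjoint (F '' (NL ∩ C)) (F '' (NL ∩ H)) := by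
    rw [Set.disjoint_left]
    rintro P ⟨e, ⟨heNL, heC⟩, rfl⟩ ⟨f, hf, hPf⟩
    have heP : e ∈ F e := M.mem_closure_of_mem' rfl (hNLE heNL)
    rw [← hPf] at heP
    exact (hFH f hf heP).2 heC
  have hinj : Set.InjOn (· ∩ C) (F '' (NL ∩ C)) := by
    rintro P ⟨e, ⟨heNL, heC⟩, rfl⟩ Q ⟨f, ⟨hfNL, hfC⟩, rfl⟩ hPQ
    have hPQ' : F e ∩ C = F f ∩ C := hPQ
    have hfP : f ∈ F e := by
      have h1 : f ∈ F f ∩ C := ⟨M.mem_closure_of_mem' rfl (hNLE hfNL), hfC⟩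
      rw [← hPQ'] at h1
      exact h1.1
    exact (parallel_closure_eq' heNL hfNL hfP).symm
  have hNLsplit : NL = (NL ∩ C) ∪ (NL ∩ H) := by
    rw [← inter_union_distrib_left, hH, union_diff_cancel hCE,
      inter_eq_self_of_subset_left hNLE]
  have hfinC : (F '' (NL ∩ C)).Finite := (hNLfin.subset inter_subset_left).image _
  have hfinH : (F '' (NL ∩ H)).Finite := (hNLfin.subset inter_subset_left).image _
  have himg : F '' NL = F '' (NL ∩ C) ∪ F '' (NL ∩ H) := by
    rw [← image_union, ← hNLsplit]
  have h1 : eps M = (F '' (NL ∩ C)).ncard + (F '' (NL ∩ H)).ncard := by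
    rw [eps, hPts, himg]
    exact Set.ncard_union_eq hdisj hfinC hfinH
  have h2 : eps (M ↾ C) = (F '' (NL ∩ C)).ncard := by
    rw [eps, hPtsC, ← image_image (fun P => P ∩ C) F]
    exact Set.ncard_image_of_injOn hinj
  have h3 : eps (M ↾ H) = (F '' (NL ∩ H)).ncard := by rw [eps, hPtsH]
  rw [h1, h2, h3]

end Helpers

end PaperDefs

open PaperDefs

theorem stmt4 {α : Type*} (M : Matroid α) (hfin : M.E.Finite) (a : ℝ) (ha : 0 < a)
    (hres : ∀ X ⊆ M.E, rk (M ↾ X) < rk M →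
      (eps (M ↾ X) : ℝ) ≤ a * ((1 + Real.sqrt 5) / 2) ^ rk (M ↾ X))
    (hM : a * ((1 + Real.sqrt 5) / 2) ^ rk M < (eps M : ℝ)) :
    ∀ C, Cocircuit M C → rk M - 1 ≤ rkOf M C := by
  intro C hC
  by_contra hlt
  push_neg at hlt
  have hCE : C ⊆ M.E := by have := hC.1; rwa [dual_ground] at this
  have hlt' : rk (M ↾ C) < rk M - 1 := hlt
  have hsplit := eps_split' hfin hC
  have hrh : rk (M ↾ (M.E \ C)) < rk M := rk_restrict_lt_of_cocircuit hfin hC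
  have hrc : rk (M ↾ C) < rk M := by omega
  have h1 := hres C hCE hrc
  have h2 := hres (M.E \ C) diff_subset hrh
  set φ : ℝ := (1 + Real.sqrt 5) / 2 with hφ
  have h5 : Real.sqrt 5 ^ 2 = 5 := Real.sq_sqrt (by norm_num)
  have hφ1 : (1:ℝ) ≤ φ := by
    rw [hφ]
    nlinarith [Real.sqrt_nonneg 5]
  have hφ0 : (0:ℝ) ≤ φ := by linarith
  set r := rk M with hr
  set rc := rk (M ↾ C) with hrc'
  set rh := rk (M ↾ (M.E \ C)) with hrh'
  have key : φ ^ rc + φ ^ rh ≤ φ ^ r := by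
    obtain ⟨s, hs⟩ : ∃ s, r = s + 2 := ⟨r - 2, by omega⟩
    have hmc : φ ^ rc ≤ φ ^ s := pow_le_pow_right₀ hφ1 (by omega)
    have hmh : φ ^ rh ≤ φ ^ (s + 1) := pow_le_pow_right₀ hφ1 (by omega)
    have hsq : φ ^ 2 = φ + 1 := by
      rw [hφ]
      nlinarith [Real.sqrt_nonneg 5]
    calc φ ^ rc + φ ^ rh ≤ φ ^ s + φ ^ (s + 1) := add_le_add hmc hmh
      _ = φ ^ s * (1 + φ) := by ring
      _ = φ ^ s * φ ^ 2 := by rw [hsq]; ring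
      _ = φ ^ r := by rw [hs]; ring
  have hsum : (eps M : ℝ) = (eps (M ↾ C) : ℝ) + (eps (M ↾ (M.E \ C)) : ℝ) := by
    rw [hsplit]; push_cast; ring
  have hle : (eps M : ℝ) ≤ a * φ ^ r := by
    rw [hsum]
    calc (eps (M ↾ C) : ℝ) + (eps (M ↾ (M.E \ C)) : ℝ)
        ≤ a * φ ^ rc + a * φ ^ rh := add_le_add h1 h2
      _ = a * (φ ^ rc + φ ^ rh) := by ring
      _ ≤ a * φ ^ r := mul_le_mul_of_nonneg_left key ha.le
  linarith
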